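/- Let F be a field, ω a weight function assigning nonzero scalars to permutations, B ⊆ [n]×[n], and k ≥ 0. Then the maximum dimension of a linear subspace W ≤ M_B(F) with rk_ω(A) ≤ k for all A ∈ W equals the maximum of |B'| over subsets B' ⊆ B with bipartite matching number ν_b(B') ≤ k. -/

import Mathlib

open Matrix

/-- A bipartite matching: all first coordinates distinct, all second coordinates distinct. -/
def IsBipMatching {n : ℕ} (B₀ : Finset (Fin n × Fin n)) : Prop :=
  ∀ p ∈ B₀, ∀ q ∈ B₀, p ≠ q → p.1 ≠ q.1 ∧ p.2 ≠ q.2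

/-- The bipartite matching number of a set of positions. -/
noncomputable def nuB {n : ℕ} (B : Set (Fin n × Fin n)) : ℕ :=
  sSup {m | ∃ B₀ : Finset (Fin n × Fin n), ↑B₀ ⊆ B ∧ IsBipMatching B₀ ∧ B₀.card = m}

/-- The Schur functional `D_ω`. -/
def Dw {F : Type*} [Field F] (ω : ∀ m : ℕ, Equiv.Perm (Fin m) → F) {m : ℕ}
    (A : Matrix (Fin m) (Fin m) F) : F :=
  ∑ σ : Equiv.Perm (Fin m), ω m σ * ∏ i, A i (σ i)

/-- The ω-rank: the largest k such that some k×k submatrix B has `D_ω B ≠ 0`. -/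
noncomputable def rkw {F : Type*} [Field F] (ω : ∀ m : ℕ, Equiv.Perm (Fin m) → F) {n : ℕ}
    (A : Matrix (Fin n) (Fin n) F) : ℕ :=
  sSup {k | ∃ I J : Fin k → Fin n, StrictMono I ∧ StrictMono J ∧
    Dw ω (A.submatrix I J) ≠ 0}

/-- The permanent. -/
def per {F : Type*} [Field F] {m : ℕ} (A : Matrix (Fin m) (Fin m) F) : F :=
  ∑ σ : Equiv.Perm (Fin m), ∏ i, A i (σ i)

/-- The permanental rank. -/
noncomputable def prk {F : Type*} [Field F] {n : ℕ} (A : Matrix (Fin n) (Fin n) F) : ℕ :=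
  sSup {k | ∃ I J : Fin k → Fin n, StrictMono I ∧ StrictMono J ∧
    per (A.submatrix I J) ≠ 0}

/-- Lexicographic (row-major) order on positions. -/
def LexLt {n : ℕ} (p q : Fin n × Fin n) : Prop :=
  p.1 < q.1 ∨ (p.1 = q.1 ∧ p.2 < q.2)

/-- `BW W` is the set of lexicographically minimal support positions of nonzero matrices in `W`. -/
def BW {F : Type*} [Field F] {n : ℕ} (W : Submodule F (Matrix (Fin n) (Fin n) F)) :
    Set (Fin n × Fin n) :=
  {p | ∃ A ∈ W, A ≠ 0 ∧ A p.1 p.2 ≠ 0 ∧ ∀ q, LexLt q p → A q.1 q.2 = 0}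

/-- Alternating matrix: `A = -Aᵗ` and zero diagonal. -/
def IsAlt {F : Type*} [Field F] {n : ℕ} (A : Matrix (Fin n) (Fin n) F) : Prop :=
  Aᵀ = -A ∧ ∀ i, A i i = 0

/-- A matching in a graph: pairwise disjoint edges. -/
def IsGraphMatching {n : ℕ} (M : Finset (Sym2 (Fin n))) : Prop :=
  ∀ e ∈ M, ∀ f ∈ M, e ≠ f → ∀ x : Fin n, x ∈ e → x ∉ f

/-- The matching number of a graph. -/
noncomputable def nuG {n : ℕ} (G : Set (Sym2 (Fin n))) : ℕ :=
  sSup {m | ∃ M : Finset (Sym2 (Fin n)), ↑M ⊆ G ∧ IsGraphMatching M ∧ M.card = m}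

/-- `GU U`: edges `{i,j}` arising as lexicographically minimal support positions in `U`. -/
def GU {F : Type*} [Field F] {n : ℕ} (U : Submodule F (Matrix (Fin n) (Fin n) F)) :
    Set (Sym2 (Fin n)) :=
  {e | ∃ A ∈ U, ∃ i j : Fin n, A ≠ 0 ∧ A i j ≠ 0 ∧
    (∀ q : Fin n × Fin n, LexLt q (i, j) → A q.1 q.2 = 0) ∧ e = s(i, j)}


/-!
A subspace `W` has at least `dim W` distinct lexicographically leading positions `BW W`
(echelon form), all inside `B`. If `BW W` contained a matching of size `m`, choose for each
matched position a matrix of `W` leading there. After sorting rows and columns these matrices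
are triangular on the matched `m × m` submatrix, so by inclusion–exclusion the alternating sum
of `D_ω` over all their partial sums collapses to `ω` of the matching permutation times a
product of leading entries, which is nonzero. Hence some partial sum, an element of `W`, has
`rk_ω ≥ m`, and so `ν_b (BW W) ≤ k`. Conversely, a nonzero term of `D_ω` of a submatrix of a
matrix supported on `B'` is a matching in `B'`, so all matrices supported on `B'` have
`rk_ω ≤ ν_b B'`, and they form a space of dimension `|B'|`.
-/

open Finset Equiv

section InclusionExclusion

variable {R : Type*} [CommRing R] {ι κ : Type*} [Fintype ι] [DecidableEq ι] [Fintype κ]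
  [DecidableEq κ]

theorem sum_superset_neg_one_pow_card_compl (T : Finset ι) :
    ∑ S : Finset ι, (if T ⊆ S then (-1 : R) ^ #Sᶜ else 0) = if T = univ then 1 else 0 := by
  rw [← (compl_involutive (α := Finset ι)).bijective.sum_comp]
  simp only [compl_compl, Finset.subset_compl_comm (s := T)]
  rw [← sum_filter, show univ.filter (· ⊆ Tᶜ) = Tᶜ.powerset by ext; simp]
  have := congrArg (Int.cast : ℤ → R) (sum_powerset_neg_one_pow_card (x := Tᶜ))
  push_cast at this
  simpa only [compl_eq_empty_iff] using this

theorem sum_neg_one_pow_card_compl_mul_prod_sum (a : κ → ι → R) :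
    ∑ S : Finset ι, (-1 : R) ^ #Sᶜ * ∏ x, ∑ t ∈ S, a x t =
      ∑ g : κ → ι with Function.Surjective g, ∏ x, a x (g x) := by
  have expand (S : Finset ι) : ∏ x, ∑ t ∈ S, a x t =
      ∑ g : κ → ι, if univ.image g ⊆ S then ∏ x, a x (g x) else 0 := by
    rw [prod_univ_sum, ← sum_filter]
    congr 1
    ext g
    simp [Fintype.mem_piFinset, image_subset_iff]
  simp only [expand, mul_sum]
  rw [sum_comm, sum_filter]
  refine sum_congr rfl fun g _ => ?_
  simp only [mul_ite, mul_zero, ← ite_zero_mul, ← sum_mul]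
  have : univ.image g = univ ↔ Function.Surjective g := by
    rw [← coe_eq_univ, coe_image, coe_univ, Set.image_univ, Set.range_eq_univ]
  simp only [sum_superset_neg_one_pow_card_compl, this, ite_mul, one_mul, zero_mul]

end InclusionExclusion

theorem Fin.eq_of_bijective_of_forall_le {m : ℕ} {f g : Fin m → Fin m}
    (hf : Function.Bijective f) (hg : Function.Bijective g) (h : ∀ i, f i ≤ g i) : f = g := by
  have hsum : ∑ i, (f i : ℕ) = ∑ i, (g i : ℕ) := by
    rw [hf.sum_comp (fun j => (j : ℕ)), hg.sum_comp (fun j => (j : ℕ))]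
  funext i
  exact Fin.ext ((sum_eq_sum_iff_of_le (f := fun i => (f i : ℕ)) (g := fun i => (g i : ℕ))
    fun i _ => h i).1 hsum i (mem_univ i))

section SchurFunctional

variable {F : Type*} [Field F] (ω : ∀ m : ℕ, Perm (Fin m) → F) {m : ℕ}

theorem sum_neg_one_pow_mul_Dw_sum (M : Fin m → Matrix (Fin m) (Fin m) F) :
    ∑ S : Finset (Fin m), (-1 : F) ^ #Sᶜ * Dw ω (∑ t ∈ S, M t) =
      ∑ σ : Perm (Fin m), ω m σ *
        ∑ g : Fin m → Fin m with Function.Surjective g, ∏ i, M (g i) i (σ i) := by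
  have expand (σ : Perm (Fin m)) :
      ω m σ * ∑ g : Fin m → Fin m with Function.Surjective g, ∏ i, M (g i) i (σ i) =
        ∑ S : Finset (Fin m), (-1 : F) ^ #Sᶜ * (ω m σ * ∏ i, (∑ t ∈ S, M t) i (σ i)) := by
    rw [← sum_neg_one_pow_card_compl_mul_prod_sum (fun i t => M t i (σ i)), mul_sum]
    simp only [Matrix.sum_apply, mul_left_comm]
  simp only [expand, Dw, mul_sum]
  exact sum_comm

theorem sum_neg_one_pow_mul_Dw_sum_of_triangular (M : Fin m → Matrix (Fin m) (Fin m) F)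
    (κ : Perm (Fin m)) (hrow : ∀ t i j, i < t → M t i j = 0)
    (hlead : ∀ t j, j < κ t → M t t j = 0) :
    ∑ S : Finset (Fin m), (-1 : F) ^ #Sᶜ * Dw ω (∑ t ∈ S, M t) = ω m κ * ∏ i, M i i (κ i) := by
  have only_id (σ : Perm (Fin m)) :
      ∑ g : Fin m → Fin m with Function.Surjective g, ∏ i, M (g i) i (σ i) =
        ∏ i, M i i (σ i) := by
    refine sum_eq_single_of_mem id (mem_filter.2 ⟨mem_univ _, Function.surjective_id⟩)
      fun g hg hne => ?_
    obtain ⟨i, hi⟩ : ∃ i, i < g i := by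
      by_contra! h
      exact hne (Fin.eq_of_bijective_of_forall_le
        (Finite.surjective_iff_bijective.1 (mem_filter.1 hg).2) Function.bijective_id h)
    exact prod_eq_zero (mem_univ i) (hrow _ _ _ hi)
  rw [sum_neg_one_pow_mul_Dw_sum]
  simp only [only_id]
  refine sum_eq_single_of_mem κ (mem_univ _) fun σ _ hne => ?_
  obtain ⟨i, hi⟩ : ∃ i, σ i < κ i := by
    by_contra! h
    exact hne (DFunLike.coe_injective
      (Fin.eq_of_bijective_of_forall_le κ.bijective σ.bijective h)).symm
  rw [prod_eq_zero (mem_univ i) (hlead i (σ i) hi), mul_zero]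

theorem exists_Dw_sum_ne_zero_of_triangular (M : Fin m → Matrix (Fin m) (Fin m) F)
    (κ : Perm (Fin m)) (hω : ω m κ ≠ 0) (hdiag : ∀ i, M i i (κ i) ≠ 0)
    (hrow : ∀ t i j, i < t → M t i j = 0) (hlead : ∀ t j, j < κ t → M t t j = 0) :
    ∃ S : Finset (Fin m), Dw ω (∑ t ∈ S, M t) ≠ 0 := by
  by_contra! h
  have := sum_neg_one_pow_mul_Dw_sum_of_triangular ω M κ hrow hlead
  simp only [h, mul_zero, sum_const_zero] at this
  exact mul_ne_zero hω (prod_ne_zero_iff.2 fun i _ => hdiag i) this.symm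

end SchurFunctional

section Matchings

variable {n : ℕ}

theorem IsBipMatching.exists_strictMono_perm {B₀ : Finset (Fin n × Fin n)}
    (h : IsBipMatching B₀) :
    ∃ I J : Fin #B₀ → Fin n, StrictMono I ∧ StrictMono J ∧
      ∃ κ : Perm (Fin #B₀), ∀ i, (I i, J (κ i)) ∈ B₀ := by
  classical
  have hfst : Set.InjOn Prod.fst (B₀ : Set (Fin n × Fin n)) := fun p hp q hq hpq =>
    by_contra fun hne => (h p hp q hq hne).1 hpq
  have hsnd : Set.InjOn Prod.snd (B₀ : Set (Fin n × Fin n)) := fun p hp q hq hpq =>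
    by_contra fun hne => (h p hp q hq hne).2 hpq
  let I := (B₀.image Prod.fst).orderEmbOfFin (card_image_of_injOn hfst)
  let J := (B₀.image Prod.snd).orderEmbOfFin (card_image_of_injOn hsnd)
  have row (i : Fin #B₀) : ∃ p ∈ B₀, p.1 = I i := mem_image.1 (orderEmbOfFin_mem _ _ i)
  choose φ hφ hφI using row
  have col (i : Fin #B₀) : (φ i).2 ∈ Set.range J := by
    rw [range_orderEmbOfFin]
    exact mem_image_of_mem _ (hφ i)
  choose κ hκ using col
  have hκinj : Function.Injective κ := fun i i' he => by
    have : φ i = φ i' := hsnd (hφ i) (hφ i') (by rw [← hκ, ← hκ, he])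
    exact I.injective (by rw [← hφI, ← hφI, this])
  refine ⟨I, J, I.strictMono, J.strictMono, Equiv.ofBijective κ hκinj.bijective_of_finite,
    fun i => ?_⟩
  convert hφ i using 1
  exact Prod.ext (hφI i).symm (hκ i)

theorem le_nuB {B₀ : Finset (Fin n × Fin n)} {V : Set (Fin n × Fin n)} (hsub : ↑B₀ ⊆ V)
    (h : IsBipMatching B₀) : #B₀ ≤ nuB V :=
  le_csSup ⟨Fintype.card (Fin n × Fin n), by rintro _ ⟨B₁, -, -, rfl⟩; exact card_le_univ B₁⟩
    ⟨B₀, hsub, h, rfl⟩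

variable {F : Type*} [Field F] (ω : ∀ m : ℕ, Perm (Fin m) → F)

theorem le_rkw (A : Matrix (Fin n) (Fin n) F) {m : ℕ} {I J : Fin m → Fin n} (hI : StrictMono I)
    (hJ : StrictMono J) (h : Dw ω (A.submatrix I J) ≠ 0) : m ≤ rkw ω A :=
  le_csSup
    ⟨n, by rintro _ ⟨I, -, hI, -, -⟩; simpa using Fintype.card_le_of_injective I hI.injective⟩
    ⟨I, J, hI, hJ, h⟩

theorem rkw_le_nuB {A : Matrix (Fin n) (Fin n) F} {V : Set (Fin n × Fin n)}
    (hA : ∀ i j, (i, j) ∉ V → A i j = 0) : rkw ω A ≤ nuB V := by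
  refine csSup_le' ?_
  rintro m ⟨I, J, hI, hJ, hD⟩
  obtain ⟨σ, -, hσ⟩ := exists_ne_zero_of_sum_ne_zero hD
  have hmem (i : Fin m) : (I i, J (σ i)) ∈ V := by
    by_contra hi
    exact hσ (by rw [prod_eq_zero (mem_univ i) (hA _ _ hi), mul_zero])
  let e : Fin m ↪ Fin n × Fin n :=
    ⟨fun i => (I i, J (σ i)), fun a b hab => hI.injective (congrArg Prod.fst hab)⟩
  have hmatch : IsBipMatching (univ.map e) := by
    simp only [IsBipMatching, mem_map, mem_univ, true_and]
    rintro _ ⟨a, rfl⟩ _ ⟨b, rfl⟩ hab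
    exact ⟨fun h => hab (congrArg e (hI.injective h)),
      fun h => hab (congrArg e (σ.injective (hJ.injective h)))⟩
  have hsub : ↑(univ.map e) ⊆ V := fun p hp => by
    obtain ⟨i, -, rfl⟩ := mem_map.1 hp
    exact hmem i
  simpa using le_nuB hsub hmatch

end Matchings

section LeadingPositions

variable {F : Type*} [Field F] {n : ℕ}

theorem Matrix.exists_leading_entry {A : Matrix (Fin n) (Fin n) F} (hA : A ≠ 0) :
    ∃ p : Fin n × Fin n, A p.1 p.2 ≠ 0 ∧ ∀ q, LexLt q p → A q.1 q.2 = 0 := by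
  classical
  obtain ⟨i, j, hij⟩ : ∃ i j, A i j ≠ 0 := by
    by_contra! h
    exact hA (Matrix.ext h)
  obtain ⟨p, hp, hmin⟩ := (univ.filter fun p : Fin n × Fin n => A p.1 p.2 ≠ 0).exists_min_image
    toLex ⟨(i, j), by simpa using hij⟩
  refine ⟨p, (mem_filter.1 hp).2, fun q hq => ?_⟩
  by_contra hq0
  exact (hmin q (by simpa using hq0)).not_gt (Prod.Lex.toLex_lt_toLex.2 hq)

theorem finrank_le_ncard_BW (W : Submodule F (Matrix (Fin n) (Fin n) F)) :
    Module.finrank F W ≤ (BW W).ncard := by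
  classical
  let Φ : W →ₗ[F] BW W → F :=
    { toFun A p := (A : Matrix (Fin n) (Fin n) F) p.1.1 p.1.2
      map_add' _ _ := rfl
      map_smul' _ _ := rfl }
  have hΦ : Function.Injective Φ := by
    refine (injective_iff_map_eq_zero Φ).2 fun A hA => ?_
    by_contra hA0
    obtain ⟨p, hp, hmin⟩ := Matrix.exists_leading_entry (A := (A : Matrix (Fin n) (Fin n) F))
      (by simpa using hA0)
    exact hp (congrFun hA ⟨p, A, A.2, by simpa using hA0, hp, hmin⟩)
  have := LinearMap.finrank_le_finrank_of_injective hΦ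
  rwa [Module.finrank_fintype_fun_eq_card, Fintype.card_eq_nat_card, Nat.card_coe_set_eq] at this

theorem BW_subset {W : Submodule F (Matrix (Fin n) (Fin n) F)} {V : Set (Fin n × Fin n)}
    (hW : ∀ A ∈ W, ∀ i j, (i, j) ∉ V → A i j = 0) : BW W ⊆ V := by
  rintro ⟨i, j⟩ ⟨A, hA, -, hij, -⟩
  by_contra hV
  exact hij (hW A hA i j hV)

variable (ω : ∀ m : ℕ, Perm (Fin m) → F)

theorem exists_mem_card_le_rkw (hω : ∀ m σ, ω m σ ≠ 0)
    {W : Submodule F (Matrix (Fin n) (Fin n) F)} {B₀ : Finset (Fin n × Fin n)}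
    (hsub : ↑B₀ ⊆ BW W) (h : IsBipMatching B₀) : ∃ A ∈ W, #B₀ ≤ rkw ω A := by
  obtain ⟨I, J, hI, hJ, κ, hκ⟩ := h.exists_strictMono_perm
  have lead (i : Fin #B₀) : ∃ T ∈ W, T (I i) (J (κ i)) ≠ 0 ∧
      ∀ q : Fin n × Fin n, LexLt q (I i, J (κ i)) → T q.1 q.2 = 0 := by
    obtain ⟨T, hT, -, hTi, hmin⟩ := hsub (hκ i)
    exact ⟨T, hT, hTi, hmin⟩
  choose T hTW hdiag hmin using lead
  obtain ⟨S, hS⟩ := exists_Dw_sum_ne_zero_of_triangular ω (fun t => (T t).submatrix I J) κ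
    (hω _ κ) hdiag (fun t i j hit => hmin t (I i, J j) (Or.inl (hI hit)))
    (fun t j hj => hmin t (I t, J j) (Or.inr ⟨rfl, hJ hj⟩))
  refine ⟨∑ t ∈ S, T t, W.sum_mem fun t _ => hTW t, le_rkw ω _ hI hJ ?_⟩
  convert hS using 2
  ext i j
  simp only [Matrix.submatrix_apply, Matrix.sum_apply]

theorem nuB_BW_le (hω : ∀ m σ, ω m σ ≠ 0) {W : Submodule F (Matrix (Fin n) (Fin n) F)} {k : ℕ}
    (hW : ∀ A ∈ W, rkw ω A ≤ k) : nuB (BW W) ≤ k := by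
  refine csSup_le' ?_
  rintro _ ⟨B₀, hsub, h, rfl⟩
  obtain ⟨A, hA, hle⟩ := exists_mem_card_le_rkw ω hω hsub h
  exact hle.trans (hW A hA)

end LeadingPositions

section SupportedMatrices

variable {n : ℕ}

def supportedMatrices (R : Type*) [Semiring R] (V : Set (Fin n × Fin n)) :
    Submodule R (Matrix (Fin n) (Fin n) R) where
  carrier := {A | ∀ i j, (i, j) ∉ V → A i j = 0}
  add_mem' ha hb i j h := by simp [ha i j h, hb i j h]
  zero_mem' _ _ _ := rfl
  smul_mem' c _ ha i j h := by simp [ha i j h]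

theorem ncard_le_finrank_supportedMatrices (F : Type*) [Field F] (V : Set (Fin n × Fin n)) :
    V.ncard ≤ Module.finrank F (supportedMatrices F V) := by
  classical
  let b (p : V) : supportedMatrices F V :=
    ⟨Matrix.single p.1.1 p.1.2 1, fun i j hij => Matrix.single_apply_of_ne _ _ _ _ _ fun he => by
      rw [← he.1, ← he.2] at hij
      exact hij p.2⟩
  have hb : LinearIndependent F b := by
    refine LinearIndependent.of_comp (supportedMatrices F V).subtype ?_
    convert (Matrix.stdBasis F (Fin n) (Fin n)).linearIndependent.comp _ Subtype.val_injective
    funext p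
    exact (Matrix.stdBasis_eq_single F p.1.1 p.1.2).symm
  have := hb.fintype_card_le_finrank
  rwa [Fintype.card_eq_nat_card, Nat.card_coe_set_eq] at this

end SupportedMatrices

theorem stmt5 {F : Type*} [Field F] {n : ℕ} (B : Set (Fin n × Fin n)) (k : ℕ)
    (ω : ∀ m : ℕ, Equiv.Perm (Fin m) → F) (hω : ∀ m σ, ω m σ ≠ 0) :
    sSup {d | ∃ W : Submodule F (Matrix (Fin n) (Fin n) F),
        (∀ A ∈ W, ∀ i j, (i, j) ∉ B → A i j = 0) ∧
        (∀ A ∈ W, rkw ω A ≤ k) ∧ Module.finrank F W = d}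
      = sSup {m | ∃ B' : Set (Fin n × Fin n), B' ⊆ B ∧ nuB B' ≤ k ∧ B'.ncard = m} := by
  apply le_antisymm
  · refine csSup_le' ?_
    rintro _ ⟨W, hWB, hWk, rfl⟩
    have bdd : BddAbove {m | ∃ B' : Set (Fin n × Fin n), B' ⊆ B ∧ nuB B' ≤ k ∧ B'.ncard = m} :=
      ⟨n * n, by rintro _ ⟨B', -, -, rfl⟩; simpa using Set.ncard_le_card B'⟩
    exact (finrank_le_ncard_BW W).trans
      (le_csSup bdd ⟨BW W, BW_subset hWB, nuB_BW_le ω hω hWk, rfl⟩)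
  · refine csSup_le' ?_
    rintro _ ⟨B', hB', hν, rfl⟩
    have bdd : BddAbove {d | ∃ W : Submodule F (Matrix (Fin n) (Fin n) F),
        (∀ A ∈ W, ∀ i j, (i, j) ∉ B → A i j = 0) ∧ (∀ A ∈ W, rkw ω A ≤ k) ∧
          Module.finrank F W = d} :=
      ⟨_, by rintro _ ⟨W, -, -, rfl⟩; exact Submodule.finrank_le W⟩
    exact (ncard_le_finrank_supportedMatrices F B').trans (le_csSup bdd
      ⟨supportedMatrices F B', fun A hA i j hij => hA i j fun h => hij (hB' h),
        fun A hA => (rkw_le_nuB ω hA).trans hν, rfl⟩)
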